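/- Let {Y_γ : γ ∈ Γ}, {Z_γ : γ ∈ Γ} be two families of integrable random variables and suppose there is a constant c ≥ 0 and an integrable random variable D ≥ 0 such that |Y_γ − E[Z_γ | G]| ≤ D a.s. for all γ ∈ Γ, for a sub-σ-algebra G. If moreover both families are directed upward and sup_γ(|Y_γ| + |Z_γ|) is integrable, then |ess sup_γ Y_γ − E[ess sup_γ Z_γ | G]| ≤ D a.s. -/

import Mathlib

open MeasureTheory Filter Topology

/-!
Choosing indices whose expectations approach `L = sup_γ E[Z_γ]` and using directedness, one gets
an a.s. increasing sequence `Z_{δ n}` whose limit `F` satisfies `E[max(Z_γ, F)] ≤ L ≤ E[F]` for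
every `γ`; so `F` is an essential upper bound of the family and hence equals `ess sup Z`.
Conditional monotone convergence then gives `E[Z_{δ n} | G] ↑ E[ess sup Z | G]`, and the bound
`E[Z_{δ n} | G] ≤ Y_{δ n} + D ≤ ess sup Y + D` passes to the limit. The reverse inequality holds
index by index, `Y_γ ≤ E[Z_γ | G] + D ≤ E[ess sup Z | G] + D`, and `ess sup Y` is the least such
bound.
-/

lemma Directed.exists_seq {Γ β : Type*} {r : β → β → Prop} {f : Γ → β}
    (hf : Directed r f) (α : ℕ → Γ) :
    ∃ δ : ℕ → Γ, ∀ n, r (f (δ n)) (f (δ (n + 1))) ∧ r (f (α n)) (f (δ (n + 1))) := by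
  choose g hg using hf
  exact ⟨fun n ↦ Nat.rec (α 0) (fun k d ↦ g d (α k)) n, fun n ↦ hg _ _⟩

namespace MeasureTheory

variable {Ω : Type*} {m0 : MeasurableSpace Ω} {μ : Measure Ω}

lemma exists_integrable_tendsto_of_monotone {f : ℕ → Ω → ℝ} {g : Ω → ℝ}
    (hf : ∀ n, Integrable (f n) μ) (hg : Integrable g μ)
    (h_mono : ∀ᵐ ω ∂μ, Monotone (f · ω)) (h_le : ∀ n, f n ≤ᵐ[μ] g) :
    ∃ F : Ω → ℝ, Integrable F μ ∧ ∀ᵐ ω ∂μ, Tendsto (f · ω) atTop (𝓝 (F ω)) := by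
  have h_bdd : ∀ᵐ ω ∂μ, BddAbove (Set.range (f · ω)) := by
    filter_upwards [ae_all_iff.2 h_le] with ω hω
    exact ⟨g ω, Set.forall_mem_range.2 hω⟩
  have h_tendsto : ∀ᵐ ω ∂μ, Tendsto (f · ω) atTop (𝓝 (⨆ n, f n ω)) := by
    filter_upwards [h_mono, h_bdd] with ω hm hb
    exact tendsto_atTop_ciSup hm hb
  refine ⟨fun ω ↦ ⨆ n, f n ω, ?_, h_tendsto⟩
  refine integrable_of_le_of_le
    (aestronglyMeasurable_of_tendsto_ae atTop (fun n ↦ (hf n).1) h_tendsto) ?_ ?_ (hf 0) hg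
  · filter_upwards [h_bdd] with ω hb using le_ciSup hb 0
  · filter_upwards [ae_all_iff.2 h_le] with ω hω using ciSup_le hω

lemma ae_le_of_integral_max_le {f g : Ω → ℝ} (hf : Integrable f μ) (hg : Integrable g μ)
    (h : ∫ ω, max (f ω) (g ω) ∂μ ≤ ∫ ω, g ω ∂μ) : f ≤ᵐ[μ] g := by
  have h_eq : g =ᵐ[μ] fun ω ↦ max (f ω) (g ω) :=
    (integral_eq_iff_of_ae_le hg (hf.sup hg) (ae_of_all _ fun ω ↦ le_max_right _ _)).1
      (le_antisymm (integral_mono hg (hf.sup hg) fun ω ↦ le_max_right _ _) h)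
  filter_upwards [h_eq] with ω hω
  exact hω ▸ le_max_left _ _

lemma exists_monotone_tendsto_of_directed {Γ : Type*} [Nonempty Γ] {Z : Γ → Ω → ℝ}
    {S : Ω → ℝ} (hZ : ∀ γ, Integrable (Z γ) μ) (hS : Integrable S μ)
    (hdir : Directed (· ≤ᵐ[μ] ·) Z) (h_ub : ∀ γ, Z γ ≤ᵐ[μ] S)
    (h_lub : ∀ S', (∀ γ, Z γ ≤ᵐ[μ] S') → S ≤ᵐ[μ] S') :
    ∃ δ : ℕ → Γ, (∀ᵐ ω ∂μ, Monotone fun n ↦ Z (δ n) ω) ∧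
      ∀ᵐ ω ∂μ, Tendsto (fun n ↦ Z (δ n) ω) atTop (𝓝 (S ω)) := by
  set L := ⨆ γ, ∫ ω, Z γ ω ∂μ
  have hL_bdd : BddAbove (Set.range fun γ ↦ ∫ ω, Z γ ω ∂μ) :=
    ⟨∫ ω, S ω ∂μ, Set.forall_mem_range.2 fun γ ↦ integral_mono_ae (hZ γ) hS (h_ub γ)⟩
  obtain ⟨u, -, hu_tendsto, hu_mem⟩ := exists_seq_tendsto_sSup (Set.range_nonempty _) hL_bdd
  choose α hα using hu_mem
  obtain ⟨δ, hδ⟩ := hdir.exists_seq α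
  have h_mono : ∀ᵐ ω ∂μ, Monotone fun n ↦ Z (δ n) ω := by
    filter_upwards [ae_all_iff.2 fun n ↦ (hδ n).1] with ω hω using monotone_nat_of_le_succ hω
  obtain ⟨F, hF, hF_tendsto⟩ :=
    exists_integrable_tendsto_of_monotone (fun n ↦ hZ (δ n)) hS h_mono fun n ↦ h_ub (δ n)
  have hδ_le_F : ∀ n, Z (δ n) ≤ᵐ[μ] F := fun n ↦ by
    filter_upwards [h_mono, hF_tendsto] with ω hm ht using hm.ge_of_tendsto ht n
  have hL_le : L ≤ ∫ ω, F ω ∂μ := by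
    refine le_of_tendsto hu_tendsto (Eventually.of_forall fun n ↦ ?_)
    rw [← hα n]
    exact (integral_mono_ae (hZ _) (hZ _) (hδ n).2).trans (integral_mono_ae (hZ _) hF (hδ_le_F _))
  have hF_ub : ∀ γ, Z γ ≤ᵐ[μ] F := by
    intro γ
    refine ae_le_of_integral_max_le (hZ γ) hF (le_trans ?_ hL_le)
    have h_max_tendsto := integral_tendsto_of_tendsto_of_monotone
      (fun n ↦ (hZ γ).sup (hZ (δ n))) ((hZ γ).sup hF)
      (h_mono.mono fun ω hω _ _ hij ↦ max_le_max le_rfl (hω hij))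
      (hF_tendsto.mono fun ω hω ↦ tendsto_const_nhds.max hω)
    refine le_of_tendsto' h_max_tendsto fun n ↦ ?_
    obtain ⟨γ', h₁, h₂⟩ := hdir γ (δ n)
    calc ∫ ω, max (Z γ ω) (Z (δ n) ω) ∂μ ≤ ∫ ω, Z γ' ω ∂μ :=
          integral_mono_ae ((hZ γ).sup (hZ (δ n))) (hZ γ') <| by
            filter_upwards [h₁, h₂] with ω using max_le
      _ ≤ L := le_ciSup hL_bdd γ'
  have hF_le : F ≤ᵐ[μ] S := by
    filter_upwards [hF_tendsto, ae_all_iff.2 fun n ↦ h_ub (δ n)] with ω ht hS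
    exact le_of_tendsto' ht hS
  refine ⟨δ, h_mono, ?_⟩
  filter_upwards [hF_tendsto, h_lub F hF_ub, hF_le] with ω ht h₁ h₂
  rwa [le_antisymm h₁ h₂]

lemma tendsto_condExp_of_monotone {m : MeasurableSpace Ω} (hm : m ≤ m0)
    [SigmaFinite (μ.trim hm)] {f : ℕ → Ω → ℝ} {F : Ω → ℝ}
    (hf : ∀ n, Integrable (f n) μ) (hF : Integrable F μ)
    (h_mono : ∀ᵐ ω ∂μ, Monotone (f · ω))
    (h_tendsto : ∀ᵐ ω ∂μ, Tendsto (f · ω) atTop (𝓝 (F ω))) :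
    ∀ᵐ ω ∂μ, Tendsto (fun n ↦ (μ[f n | m]) ω) atTop (𝓝 ((μ[F | m]) ω)) := by
  have h_le : ∀ n, f n ≤ᵐ[μ] F := fun n ↦ by
    filter_upwards [h_mono, h_tendsto] with ω hm ht using hm.ge_of_tendsto ht n
  refine tendsto_of_integral_tendsto_of_monotone (fun _ ↦ integrable_condExp)
    integrable_condExp ?_ ?_ (ae_all_iff.2 fun n ↦ condExp_mono (hf n) hF (h_le n))
  · simp only [integral_condExp hm]
    exact integral_tendsto_of_tendsto_of_monotone hf hF h_mono h_tendsto
  · have h_step : ∀ n, μ[f n | m] ≤ᵐ[μ] μ[f (n + 1) | m] := fun n ↦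
      condExp_mono (hf n) (hf (n + 1)) (h_mono.mono fun ω hω ↦ hω n.le_succ)
    filter_upwards [ae_all_iff.2 h_step] with ω hω using monotone_nat_of_le_succ hω

end MeasureTheory

theorem stmt13_general {Ω : Type*} {m0 : MeasurableSpace Ω} (μ : Measure Ω)
    [IsProbabilityMeasure μ] (G : MeasurableSpace Ω) (hG : G ≤ m0)
    {Γ : Type*} [Nonempty Γ]
    (Y Z : Γ → Ω → ℝ)
    (hZint : ∀ γ, Integrable (Z γ) μ)
    (D : Ω → ℝ)
    (hbound : ∀ γ, ∀ᵐ ω ∂μ, |Y γ ω - (μ[Z γ | G]) ω| ≤ D ω)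
    (hZdir : ∀ γ₁ γ₂ : Γ, ∃ γ₃ : Γ, ∀ᵐ ω ∂μ, max (Z γ₁ ω) (Z γ₂ ω) ≤ Z γ₃ ω)
    (SY SZ : Ω → ℝ)
    (hSY_ub : ∀ γ, ∀ᵐ ω ∂μ, Y γ ω ≤ SY ω)
    (hSY_lub : ∀ S' : Ω → ℝ, (∀ γ, ∀ᵐ ω ∂μ, Y γ ω ≤ S' ω) → ∀ᵐ ω ∂μ, SY ω ≤ S' ω)
    (hSZ_ub : ∀ γ, ∀ᵐ ω ∂μ, Z γ ω ≤ SZ ω)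
    (hSZ_lub : ∀ S' : Ω → ℝ, (∀ γ, ∀ᵐ ω ∂μ, Z γ ω ≤ S' ω) → ∀ᵐ ω ∂μ, SZ ω ≤ S' ω)
    (hSZint : Integrable SZ μ) :
    ∀ᵐ ω ∂μ, |SY ω - (μ[SZ | G]) ω| ≤ D ω := by
  have hZ_directed : Directed (· ≤ᵐ[μ] ·) Z := fun γ₁ γ₂ ↦ (hZdir γ₁ γ₂).imp fun _ h ↦
    ⟨h.mono fun _ hω ↦ (le_max_left _ _).trans hω, h.mono fun _ hω ↦ (le_max_right _ _).trans hω⟩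
  have h_upper : ∀ᵐ ω ∂μ, SY ω ≤ (μ[SZ | G]) ω + D ω := hSY_lub _ fun γ ↦ by
    filter_upwards [hbound γ, condExp_mono (hZint γ) hSZint (hSZ_ub γ)] with ω hb hZ
    linarith [(abs_le.1 hb).2]
  obtain ⟨δ, h_mono, h_tendsto⟩ :=
    exists_monotone_tendsto_of_directed hZint hSZint hZ_directed hSZ_ub hSZ_lub
  have h_lower : ∀ᵐ ω ∂μ, (μ[SZ | G]) ω ≤ SY ω + D ω := by
    filter_upwards [tendsto_condExp_of_monotone hG (fun n ↦ hZint (δ n)) hSZint h_mono h_tendsto,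
      ae_all_iff.2 fun n ↦ hbound (δ n), ae_all_iff.2 fun n ↦ hSY_ub (δ n)] with ω ht hb hY
    exact le_of_tendsto' ht fun n ↦ by linarith [(abs_le.1 (hb n)).1, hY n]
  filter_upwards [h_upper, h_lower] with ω h₁ h₂
  exact abs_le.2 ⟨by linarith, by linarith⟩

/-- An a.s. bound `|Y_γ - E[Z_γ | G]| ≤ D` uniform over a directed family passes to the
essential suprema: `|ess sup Y - E[ess sup Z | G]| ≤ D` a.s. -/
theorem stmt13 {Ω : Type*} {m0 : MeasurableSpace Ω} (μ : Measure Ω)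
    [IsProbabilityMeasure μ] (G : MeasurableSpace Ω) (hG : G ≤ m0)
    {Γ : Type*} [Nonempty Γ]
    (Y Z : Γ → Ω → ℝ)
    (hYint : ∀ γ, Integrable (Y γ) μ) (hZint : ∀ γ, Integrable (Z γ) μ)
    (hYmeas : ∀ γ, StronglyMeasurable[G] (Y γ))
    (D : Ω → ℝ) (hD_nonneg : 0 ≤ᵐ[μ] D) (hD_meas : StronglyMeasurable[G] D)
    (hD_int : Integrable D μ)
    (hbound : ∀ γ, ∀ᵐ ω ∂μ, |Y γ ω - (μ[Z γ | G]) ω| ≤ D ω)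
    (hYdir : ∀ γ₁ γ₂ : Γ, ∃ γ₃ : Γ, ∀ᵐ ω ∂μ, max (Y γ₁ ω) (Y γ₂ ω) ≤ Y γ₃ ω)
    (hZdir : ∀ γ₁ γ₂ : Γ, ∃ γ₃ : Γ, ∀ᵐ ω ∂μ, max (Z γ₁ ω) (Z γ₂ ω) ≤ Z γ₃ ω)
    (henv : Integrable (fun ω => ⨆ γ, (|Y γ ω| + |Z γ ω|)) μ)
    (SY SZ : Ω → ℝ)
    (hSY_ub : ∀ γ, ∀ᵐ ω ∂μ, Y γ ω ≤ SY ω)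
    (hSY_lub : ∀ S' : Ω → ℝ, (∀ γ, ∀ᵐ ω ∂μ, Y γ ω ≤ S' ω) → ∀ᵐ ω ∂μ, SY ω ≤ S' ω)
    (hSZ_ub : ∀ γ, ∀ᵐ ω ∂μ, Z γ ω ≤ SZ ω)
    (hSZ_lub : ∀ S' : Ω → ℝ, (∀ γ, ∀ᵐ ω ∂μ, Z γ ω ≤ S' ω) → ∀ᵐ ω ∂μ, SZ ω ≤ S' ω)
    (hSYint : Integrable SY μ) (hSZint : Integrable SZ μ) :
    ∀ᵐ ω ∂μ, |SY ω - (μ[SZ | G]) ω| ≤ D ω :=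
  stmt13_general μ G hG Y Z hZint D hbound hZdir SY SZ hSY_ub hSY_lub hSZ_ub hSZ_lub hSZint
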